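/- Let Γ be a finite connected graph and let Pic⁰(Γ) be the kernel of the total degree homomorphism Pic(Γ) → ℤ. Then Pic⁰(Γ) is a finite abelian group. -/

import Mathlib

open Finset

variable (V : Type) [Fintype V] [DecidableEq V]

/-- The twist multidegree at a vertex `v` of a multigraph with edge-multiplicity
function `E`: its value at `v` is minus the number of (non-loop) edges at `v`, and
its value at a neighbour `w ≠ v` is the number of edges between `v` and `w`
(loops contribute `0` in total). -/
def twistAt (E : V → V → ℕ) (v : V) : V → ℤ :=
  fun w => if w = v then -(∑ u ∈ Finset.univ.erase v, (E v u : ℤ)) else (E v w : ℤ)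

/-- The subgroup of `ℤ^{V}` generated by the twist multidegrees. -/
def TwistSubgroup (E : V → V → ℕ) : AddSubgroup (V → ℤ) :=
  AddSubgroup.closure (Set.range (twistAt V E))

/-- The Picard group `Pic(Γ) = ℤ^{V(Γ)}/Twist_Γ` of the multigraph. -/
abbrev Pic (E : V → V → ℕ) := (V → ℤ) ⧸ TwistSubgroup V E

/-- The subset of `Pic(Γ)` of classes of multidegrees of total degree `d`. -/
def PicDeg (E : V → V → ℕ) (d : ℤ) : Set (Pic V E) :=
  {x | ∃ f : V → ℤ, (QuotientAddGroup.mk f : Pic V E) = x ∧ ∑ v, f v = d}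

/-- Connectivity of the multigraph with edge multiplicity `E`. -/
def GraphConn (E : V → V → ℕ) : Prop :=
  ∀ u v : V, Relation.ReflTransGen (fun a b => 0 < E a b) u v

/-- Number of edges (loops counted once). -/
def numEdges (E : V → V → ℕ) : ℕ := ((∑ u, ∑ v, E u v) + ∑ v, E v v) / 2

/-- First Betti number `|E| - |V| + 1`, as an integer. -/
def betti1 (E : V → V → ℕ) : ℤ := (numEdges V E : ℤ) - Fintype.card V + 1

/-- Total genus `Σ_v g(v) + b₁(Γ)` of a multigraph with genus function `gv`. -/
def totalGenus (E : V → V → ℕ) (gv : V → ℕ) : ℤ := (∑ v, (gv v : ℤ)) + betti1 V E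

/-!
Over an ordered field, a vector in the kernel of the twist map `x ↦ ∑ᵥ xᵥ · twist_v` is
constant on a connected graph (at a maximum of `x` every neighbour must attain the same value),
so the kernel is the line of constants and meets the hyperplane of sum-zero vectors trivially.
Counting dimensions, the image of the twist map over `ℚ` is the whole sum-zero hyperplane;
clearing denominators, every degree-zero multidegree has a nonzero multiple in the twist
subgroup. Thus `Pic⁰(Γ)` is a torsion subgroup of the finitely generated group `Pic(Γ)`,
hence finite.
-/

section Twist

variable {V : Type} [Fintype V] [DecidableEq V]

theorem twistAt_of_ne (E : V → V → ℕ) {v w : V} (h : w ≠ v) : twistAt V E v w = E v w :=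
  if_neg h

theorem sum_twistAt (E : V → V → ℕ) (v : V) : ∑ w, twistAt V E v w = 0 := by
  rw [← add_sum_erase _ _ (mem_univ v),
    sum_congr rfl fun w hw => twistAt_of_ne E (ne_of_mem_erase hw), twistAt, if_pos rfl,
    neg_add_cancel]

theorem sum_zsmul_twistAt_mem (E : V → V → ℕ) (c : V → ℤ) :
    ∑ v, c v • twistAt V E v ∈ TwistSubgroup V E :=
  sum_mem fun v _ => zsmul_mem (AddSubgroup.subset_closure (Set.mem_range_self v)) _

variable (R : Type*) [CommRing R]

noncomputable def twistMap (E : V → V → ℕ) : (V → R) →ₗ[R] V → R :=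
  Fintype.linearCombination R fun v w => (twistAt V E v w : R)

def sumZero : Submodule R (V → R) where
  carrier := {x | ∑ v, x v = 0}
  add_mem' hx hy := by simp_all [sum_add_distrib]
  zero_mem' := by simp
  smul_mem' c x hx := by simp_all [← mul_sum]

variable {R} {E : V → V → ℕ}

theorem twistMap_apply (x : V → R) (w : V) :
    twistMap R E x w = ∑ v, x v * twistAt V E v w := by
  simp [twistMap, Fintype.linearCombination_apply, Finset.sum_apply]

theorem twistMap_intCast (c : V → ℤ) :
    twistMap R E (fun v => (c v : R)) = fun w => ((∑ v, c v • twistAt V E v) w : R) := by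
  ext w
  simp [twistMap_apply, Finset.sum_apply]

theorem twistMap_apply_of_symm (hsymm : ∀ u v, E u v = E v u) (x : V → R) (w : V) :
    twistMap R E x w = ∑ u ∈ univ.erase w, (E w u : R) * (x u - x w) := by
  have hne : ∀ u ∈ univ.erase w, x u * (twistAt V E u w : R) = E w u * x u := fun u hu => by
    rw [twistAt_of_ne E (ne_of_mem_erase hu).symm, hsymm, Int.cast_natCast, mul_comm]
  rw [twistMap_apply, ← add_sum_erase _ _ (mem_univ w), sum_congr rfl hne, twistAt, if_pos rfl]
  simp only [mul_sub, sum_sub_distrib, ← sum_mul]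
  push_cast
  ring

theorem twistMap_mem_sumZero (x : V → R) : twistMap R E x ∈ sumZero R := by
  change ∑ w, twistMap R E x w = 0
  simp only [twistMap_apply]
  rw [sum_comm]
  refine sum_eq_zero fun v _ => ?_
  rw [← mul_sum, ← Int.cast_sum, sum_twistAt, Int.cast_zero, mul_zero]

variable {K : Type*} [Field K] [LinearOrder K] [IsStrictOrderedRing K]

theorem eq_of_twistMap_apply_eq_zero_of_isMax (hsymm : ∀ u v, E u v = E v u) {x : V → K}
    {a b : V} (hx : twistMap K E x a = 0) (hmax : ∀ u, x u ≤ x a) (hab : 0 < E a b) :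
    x b = x a := by
  rcases eq_or_ne b a with rfl | hba
  · rfl
  have hnonpos : ∀ u ∈ univ.erase a, (E a u : K) * (x u - x a) ≤ 0 := fun u _ =>
    mul_nonpos_of_nonneg_of_nonpos (Nat.cast_nonneg _) (sub_nonpos.mpr (hmax u))
  rw [twistMap_apply_of_symm hsymm] at hx
  have hb := (sum_eq_zero_iff_of_nonpos hnonpos).mp hx b (mem_erase.mpr ⟨hba, mem_univ b⟩)
  rw [mul_eq_zero, Nat.cast_eq_zero, sub_eq_zero] at hb
  exact hb.resolve_left hab.ne'

theorem eq_of_twistMap_eq_zero (hsymm : ∀ u v, E u v = E v u) (hconn : GraphConn V E)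
    {x : V → K} (hx : twistMap K E x = 0) (v w : V) : x v = x w := by
  obtain ⟨a, -, ha⟩ := exists_max_image univ x ⟨v, mem_univ v⟩
  have hmax : ∀ u, x u ≤ x a := fun u => ha u (mem_univ u)
  have hconst : ∀ u, x u = x a := fun u => by
    induction hconn a u with
    | refl => rfl
    | tail _ hstep ih =>
      rw [← ih] at hmax ⊢
      exact eq_of_twistMap_apply_eq_zero_of_isMax hsymm (congrFun hx _) hmax hstep
  rw [hconst v, hconst w]

theorem disjoint_ker_twistMap_sumZero (hsymm : ∀ u v, E u v = E v u) (hconn : GraphConn V E) :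
    Disjoint (LinearMap.ker (twistMap K E)) (sumZero K) := by
  refine Submodule.disjoint_def.mpr fun x hx hsum => funext fun v => ?_
  have hconst := eq_of_twistMap_eq_zero hsymm hconn (LinearMap.mem_ker.mp hx) v
  change ∑ u, x u = 0 at hsum
  have : Nonempty V := ⟨v⟩
  rw [sum_congr rfl fun u _ => (hconst u).symm, sum_const, card_univ, nsmul_eq_mul,
    mul_eq_zero, Nat.cast_eq_zero] at hsum
  exact hsum.resolve_left Fintype.card_ne_zero

theorem range_twistMap (hsymm : ∀ u v, E u v = E v u) (hconn : GraphConn V E) :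
    LinearMap.range (twistMap K E) = sumZero K := by
  have hle : LinearMap.range (twistMap K E) ≤ sumZero K := by
    rintro _ ⟨x, rfl⟩
    exact twistMap_mem_sumZero x
  refine Submodule.eq_of_le_of_finrank_le hle ?_
  have hdim := Submodule.finrank_sup_add_finrank_inf_eq (LinearMap.ker (twistMap K E)) (sumZero K)
  rw [(disjoint_ker_twistMap_sumZero hsymm hconn).eq_bot, finrank_bot] at hdim
  have hsup := Submodule.finrank_le (LinearMap.ker (twistMap K E) ⊔ sumZero K)
  have hrank := LinearMap.finrank_range_add_finrank_ker (twistMap K E)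
  omega

theorem exists_zsmul_mem_twistSubgroup (hsymm : ∀ u v, E u v = E v u) (hconn : GraphConn V E)
    {f : V → ℤ} (hf : ∑ v, f v = 0) : ∃ m : ℤ, m ≠ 0 ∧ m • f ∈ TwistSubgroup V E := by
  have hfQ : (fun v => (f v : ℚ)) ∈ sumZero ℚ := by
    change ∑ v, (f v : ℚ) = 0
    rw [← Int.cast_sum, hf, Int.cast_zero]
  obtain ⟨x, hx⟩ := (range_twistMap hsymm hconn).ge hfQ
  obtain ⟨⟨m, hm⟩, hint⟩ := IsLocalization.exist_integer_multiples_of_finite (nonZeroDivisors ℤ) x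
  choose c hc using hint
  have hcx : (fun v => (c v : ℚ)) = (m : ℚ) • x := funext fun v => by simpa using hc v
  refine ⟨m, nonZeroDivisors.ne_zero hm, ?_⟩
  convert sum_zsmul_twistAt_mem E c using 1
  funext w
  apply Int.cast_injective (α := ℚ)
  calc ((m • f) w : ℚ) = ((m : ℚ) • twistMap ℚ E x) w := by simp [hx]
    _ = twistMap ℚ E (fun v => (c v : ℚ)) w := by rw [hcx, map_smul]
    _ = _ := congrFun (twistMap_intCast c) w

theorem isOfFinAddOrder_mk_of_sum_eq_zero (hsymm : ∀ u v, E u v = E v u) (hconn : GraphConn V E)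
    {f : V → ℤ} (hf : ∑ v, f v = 0) : IsOfFinAddOrder (QuotientAddGroup.mk f : Pic V E) := by
  obtain ⟨m, hm, hmem⟩ := exists_zsmul_mem_twistSubgroup hsymm hconn hf
  exact isOfFinAddOrder_iff_zsmul_eq_zero.mpr ⟨m, hm, (QuotientAddGroup.eq_zero_iff _).mpr hmem⟩

end Twist

theorem AddSubgroup.addGroupFG_of_addGroupFG {G : Type*} [AddCommGroup G] [AddGroup.FG G]
    (H : AddSubgroup G) : AddGroup.FG H := by
  have : Module.Finite ℤ G := Module.Finite.iff_addGroup_fg.mpr inferInstance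
  rw [AddGroup.fg_iff_addSubgroup_fg, ← AddSubgroup.toIntSubmodule_toAddSubgroup H,
    ← Submodule.fg_iff_addSubgroup_fg]
  exact IsNoetherian.noetherian _

/-- The degree-0 Picard group `Pic⁰(Γ)` of a finite connected graph is finite
(it is an abelian group by construction, being the kernel of a homomorphism
between abelian groups). -/
theorem stmt5 (V : Type) [Fintype V] [DecidableEq V] (E : V → V → ℕ)
    (hsymm : ∀ u v, E u v = E v u) (hconn : GraphConn V E)
    (φ : Pic V E →+ ℤ)
    (hφ : ∀ f : V → ℤ, φ (QuotientAddGroup.mk f) = ∑ v, f v) :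
    Finite φ.ker := by
  have := AddSubgroup.addGroupFG_of_addGroupFG φ.ker
  refine AddCommGroup.finite_of_fg_isAddTorsion _ fun g => AddSubmonoid.isOfFinAddOrder_coe.mp ?_
  obtain ⟨f, hf⟩ := QuotientAddGroup.mk_surjective (g : Pic V E)
  have hdeg : ∑ v, f v = 0 := by rw [← hφ, hf]; exact g.2
  rw [← hf]
  exact isOfFinAddOrder_mk_of_sum_eq_zero hsymm hconn hdeg
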